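/- Let n ≥ 1 be an integer and d > 1 a real number. Then T_n(d) > 0, and for every real polynomial P of degree at most n with P(d) = 1, there exists x ∈ [−1, 1] with |P(x)| ≥ 1/T_n(d); equivalently, the supremum of |P| over [−1, 1] is at least 1/T_n(d). -/
import Mathlib


open Real Polynomial


lemma cheb_T_natDegree_le : ∀ k : ℕ, (Polynomial.Chebyshev.T ℝ (k : ℤ)).natDegree ≤ k := by
  intro k
  induction k using Nat.strong_induction_on with
  | _ k ih =>
    match k with
    | 0 => simp
    | 1 => simp
    | (m+2) =>
      have h : ((m+2 : ℕ) : ℤ) = (m : ℤ) + 2 := by push_cast; ring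
      rw [h, Polynomial.Chebyshev.T_add_two]
      refine (natDegree_sub_le _ _).trans ?_
      have h1 : (2 * X * Polynomial.Chebyshev.T ℝ ((m:ℤ)+1)).natDegree ≤ m + 2 := by
        refine (natDegree_mul_le).trans ?_
        have h2 : ((2 : ℝ[X]) * X).natDegree ≤ 1 :=
          natDegree_mul_le.trans (by simp)
        have h3 : (Polynomial.Chebyshev.T ℝ ((m:ℤ)+1)).natDegree ≤ m + 1 := by
          have := ih (m+1) (by omega)
          simpa [Nat.cast_add] using this
        omega
      have h4 : (Polynomial.Chebyshev.T ℝ (m:ℤ)).natDegree ≤ m := ih m (by omega)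
      omega

lemma cheb_T_pos_aux (x : ℝ) (hx : 1 ≤ x) :
    ∀ k : ℕ, 1 ≤ (Polynomial.Chebyshev.T ℝ (k : ℤ)).eval x ∧
      (Polynomial.Chebyshev.T ℝ (k : ℤ)).eval x ≤ (Polynomial.Chebyshev.T ℝ ((k+1 : ℕ) : ℤ)).eval x := by
  intro k
  induction k with
  | zero => simp [hx]
  | succ m ih =>
    obtain ⟨h1, h2⟩ := ih
    have hm1 : 1 ≤ (Polynomial.Chebyshev.T ℝ ((m+1:ℕ) : ℤ)).eval x := le_trans h1 h2
    refine ⟨hm1, ?_⟩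
    have hc : ((m+2 : ℕ) : ℤ) = ((m:ℤ)+1) + 1 := by push_cast; ring
    have hrec := Polynomial.Chebyshev.T_add_two ℝ (m : ℤ)
    have : (Polynomial.Chebyshev.T ℝ ((m+2:ℕ):ℤ)).eval x
        = 2 * x * (Polynomial.Chebyshev.T ℝ ((m:ℤ)+1)).eval x
          - (Polynomial.Chebyshev.T ℝ (m:ℤ)).eval x := by
      rw [show ((m+2:ℕ):ℤ) = (m:ℤ)+2 by push_cast; ring, hrec]; simp
    rw [this]
    have hm1' : 1 ≤ (Polynomial.Chebyshev.T ℝ ((m:ℤ)+1)).eval x := by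
      simpa [Nat.cast_add] using hm1
    have h2' : (Polynomial.Chebyshev.T ℝ (m:ℤ)).eval x ≤ (Polynomial.Chebyshev.T ℝ ((m:ℤ)+1)).eval x := by
      simpa [Nat.cast_add] using h2
    have key : (Polynomial.Chebyshev.T ℝ ((m+1:ℕ):ℤ)).eval x = (Polynomial.Chebyshev.T ℝ ((m:ℤ)+1)).eval x := by norm_cast
    rw [key]
    nlinarith

theorem chebyshev_minimax_lower_bound (n : ℕ) (hn : 1 ≤ n) (d : ℝ) (hd : 1 < d) :
    0 < (Polynomial.Chebyshev.T ℝ (n : ℤ)).eval d ∧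
    ∀ P : Polynomial ℝ, P.degree ≤ (n : ℕ) → P.eval d = 1 →
      ∃ x ∈ Set.Icc (-1 : ℝ) 1,
        1 / (Polynomial.Chebyshev.T ℝ (n : ℤ)).eval d ≤ |P.eval x| := by
  set c := (Polynomial.Chebyshev.T ℝ (n : ℤ)).eval d with hcdef
  have hc1 : 1 ≤ c := (cheb_T_pos_aux d hd.le n).1
  have hcpos : 0 < c := by linarith
  refine ⟨hcpos, ?_⟩
  intro P hdeg hPd
  by_contra hcon
  push_neg at hcon
  -- nodes
  have hnpos : (0:ℝ) < (n:ℝ) := by positivity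
  set x : ℕ → ℝ := fun k => Real.cos (k * π / n) with hxdef
  have hxmem : ∀ k : ℕ, x k ∈ Set.Icc (-1:ℝ) 1 := fun k => ⟨Real.neg_one_le_cos _, Real.cos_le_one _⟩
  have hθmem : ∀ k : ℕ, k ≤ n → (k:ℝ) * π / n ∈ Set.Icc (0:ℝ) π := by
    intro k hk
    constructor
    · positivity
    · rw [div_le_iff₀ hnpos]
      have : (k:ℝ) ≤ n := by exact_mod_cast hk
      nlinarith [Real.pi_pos]
  have hxanti : ∀ j k : ℕ, j < k → k ≤ n → x k < x j := by
    intro j k hjk hk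
    apply Real.strictAntiOn_cos (hθmem j (by omega)) (hθmem k hk)
    rw [div_lt_div_iff₀ hnpos hnpos]
    have : (j:ℝ) < k := by exact_mod_cast hjk
    nlinarith [Real.pi_pos, mul_pos Real.pi_pos hnpos]
  have hxle : ∀ j k : ℕ, j ≤ k → k ≤ n → x k ≤ x j := by
    intro j k hjk hk
    rcases eq_or_lt_of_le hjk with rfl | h
    · exact le_refl _
    · exact (hxanti j k h hk).le
  have hx0 : x 0 = 1 := by simp [hxdef]
  have hxval : ∀ k : ℕ, (Polynomial.Chebyshev.T ℝ (n : ℤ)).eval (x k) = (-1:ℝ)^k := by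
    intro k
    have h1 := Polynomial.Chebyshev.T_real_cos ((k:ℝ) * π / n) (n : ℤ)
    have h2 : ((n:ℤ):ℝ) * ((k:ℝ) * π / n) = (k:ℝ) * π := by
      push_cast
      field_simp
    rw [h2] at h1
    have h3 : Real.cos ((k:ℝ) * π) = (-1:ℝ)^k := by
      have := Real.cos_nat_mul_pi_sub 0 k
      simpa using this
    rw [hxdef]
    simp only []
    rw [h1, h3]
  -- the difference polynomial
  set R : Polynomial ℝ := Polynomial.Chebyshev.T ℝ (n : ℤ) - Polynomial.C c * P with hRdef
  have hReval : ∀ y : ℝ, R.eval y = (Polynomial.Chebyshev.T ℝ (n : ℤ)).eval y - c * P.eval y := by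
    intro y; simp [hRdef]
  have hRd : R.eval d = 0 := by rw [hReval, hPd]; simp [hcdef]
  -- bound on P at points of Icc
  have hPb : ∀ z : ℝ, z ∈ Set.Icc (-1:ℝ) 1 → -1 < c * P.eval z ∧ c * P.eval z < 1 := by
    intro z hz
    have h1 := hcon z hz
    have hb := abs_lt.mp h1
    constructor
    · have := mul_lt_mul_of_pos_left hb.1 hcpos
      have hcc : c * (1/c) = 1 := by field_simp
      nlinarith
    · have := mul_lt_mul_of_pos_left hb.2 hcpos
      have hcc : c * (1/c) = 1 := by field_simp
      nlinarith
  have hsign : ∀ k : ℕ, k ≤ n → 0 < (-1:ℝ)^k * R.eval (x k) := by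
    intro k hk
    obtain ⟨hl, hr⟩ := hPb (x k) (hxmem k)
    rw [hReval, hxval]
    rcases Nat.even_or_odd k with he | ho
    · rw [he.neg_one_pow]; linarith
    · rw [ho.neg_one_pow]; linarith
  -- roots between nodes
  have hroot : ∀ k : Fin n, ∃ y, y ∈ Set.Ioo (x (k+1)) (x k) ∧ R.eval y = 0 := by
    intro k
    have hk : (k:ℕ) < n := k.isLt
    set f : ℝ → ℝ := fun y => (-1:ℝ)^(k:ℕ) * R.eval y with hfdef
    have hfc : Continuous f := by
      exact continuous_const.mul (R.continuous_aeval)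
    have hab : x (k+1) ≤ x k := (hxanti k (k+1) (by omega) (by omega)).le
    have hfb : 0 < f (x k) := hsign k (by omega)
    have hfa : f (x (k+1)) < 0 := by
      have := hsign (k+1) (by omega)
      have hpow : (-1:ℝ)^((k:ℕ)+1) = -(-1:ℝ)^(k:ℕ) := by ring
      rw [hpow] at this
      simp only [hfdef]
      nlinarith
    have hmem : (0:ℝ) ∈ Set.Icc (f (x (k+1))) (f (x k)) := ⟨hfa.le, hfb.le⟩
    have := intermediate_value_Icc hab hfc.continuousOn hmem
    obtain ⟨y, hy, hfy⟩ := this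
    refine ⟨y, ⟨?_, ?_⟩, ?_⟩
    · rcases eq_or_lt_of_le hy.1 with rfl | h
      · exact absurd hfy (by linarith)
      · exact h
    · rcases eq_or_lt_of_le hy.2 with h | h
      · exact absurd (h ▸ hfy) (by linarith)
      · exact h
    · have hne : ((-1:ℝ)^(k:ℕ)) ≠ 0 := by positivity
      have := hfy
      simp only [hfdef] at this
      rcases mul_eq_zero.mp this with h | h
      · exact absurd h hne
      · exact h
  choose y hy1 hy2 using hroot
  have hyinj : Function.Injective y := by
    have hdec : ∀ i j : Fin n, i < j → y j < y i := by
      intro i j hij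
      have h1 : y j < x j := (hy1 j).2
      have h2 : x (j:ℕ) ≤ x ((i:ℕ)+1) := hxle _ _ (by omega) j.isLt.le
      have h3 : x ((i:ℕ)+1) < y i := (hy1 i).1
      linarith
    intro i j hij
    rcases lt_trichotomy i j with h | h | h
    · exact absurd hij (hdec i j h).ne'
    · exact h
    · exact absurd hij (hdec j i h).ne
  have hylt : ∀ k : Fin n, y k < d := by
    intro k
    have h1 : y k < x k := (hy1 k).2
    have h2 : x (k:ℕ) ≤ x 0 := hxle 0 k (by omega) k.isLt.le
    rw [hx0] at h2
    linarith
  set s : Finset ℝ := insert d (Finset.image y Finset.univ) with hsdef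
  have hcard : s.card = n + 1 := by
    rw [hsdef, Finset.card_insert_of_notMem, Finset.card_image_of_injective _ hyinj]
    · simp
    · intro hmem
      obtain ⟨k, _, hk⟩ := Finset.mem_image.mp hmem
      exact absurd hk (hylt k).ne
  have hdegR : R.natDegree ≤ n := by
    rw [hRdef]
    refine (natDegree_sub_le _ _).trans ?_
    have h1 := cheb_T_natDegree_le n
    have h2 : (Polynomial.C c * P).natDegree ≤ n := by
      refine natDegree_mul_le.trans ?_
      have := natDegree_le_iff_degree_le.mpr hdeg
      simp [this]
    omega
  have hR0 : R = 0 := by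
    apply Polynomial.eq_zero_of_natDegree_lt_card_of_eval_eq_zero' R s
    · intro z hz
      rw [hsdef] at hz
      rcases Finset.mem_insert.mp hz with rfl | hz
      · exact hRd
      · obtain ⟨k, _, rfl⟩ := Finset.mem_image.mp hz
        exact hy2 k
    · omega
  -- contradiction at x = 1
  have h1 : R.eval 1 = 0 := by rw [hR0]; simp
  rw [hReval] at h1
  have hT1 : (Polynomial.Chebyshev.T ℝ (n : ℤ)).eval 1 = 1 := by
    have := hxval 0
    rwa [hx0, pow_zero] at this
  rw [hT1] at h1
  have hP1 : P.eval 1 = 1 / c := by field_simp; linarith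
  have := hcon 1 ⟨by norm_num, le_refl 1⟩
  rw [hP1, abs_of_pos (by positivity)] at this
  exact lt_irrefl _ this
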